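/- There exists a constant C > 1 such that for all real numbers λ, μ ≥ 0 and all ξ ∈ Matrix (Fin 3) (Fin 3) ℝ, C^{-1}(λ+μ)‖ξ‖⁴ − C(λ+μ) ≤ (λ/2)·(tr Ẽ(ξ))² + μ·‖Ẽ(ξ)‖² ≤ C(λ+μ)‖ξ‖⁴ + C(λ+μ), where Ẽ(ξ) := (1/2)(ξ + ξᵀ + ξᵀξ). -/

import Mathlib

open Matrix

/-- The Frobenius norm of a real matrix: `‖ξ‖ = (tr(ξᵀξ))^(1/2)`. -/
noncomputable def frobNorm {M N : ℕ} (ξ : Matrix (Fin M) (Fin N) ℝ) : ℝ :=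
  Real.sqrt ((ξᵀ * ξ).trace)

/-- The Green-Saint Venant strain tensor `Ẽ(ξ) = (1/2)(ξ + ξᵀ + ξᵀξ)`. -/
noncomputable def Etil (ξ : Matrix (Fin 3) (Fin 3) ℝ) : Matrix (Fin 3) (Fin 3) ℝ :=
  (1 / 2 : ℝ) • (ξ + ξᵀ + ξᵀ * ξ)

/-!
Write `s = ‖ξ‖²`. Then `tr Ẽ(ξ) = tr ξ + s/2` with `(tr ξ)² ≤ 3s`, so `(tr Ẽ(ξ))²` is at least
`s²/16` up to a constant; and `‖Ẽ(ξ)‖ ≤ ‖ξ‖ + ‖ξ‖²/2`, so `‖Ẽ(ξ)‖²` is at most `2(s² + 1)`.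
Since `(tr A)² ≤ 3‖A‖²` for every `3 × 3` matrix, the energy `F(ξ)` lies between
`(λ+μ)/3 · (tr Ẽ(ξ))²` and `3/2 · (λ+μ) ‖Ẽ(ξ)‖²`, which gives both bounds.
-/

open Finset

attribute [local instance] Matrix.frobeniusNormedAddCommGroup Matrix.frobeniusNormedSpace

section Frobenius

variable {m n : Type*} [Fintype m] [Fintype n]

lemma frobenius_norm_sq_eq_sum (A : Matrix m n ℝ) : ‖A‖ ^ 2 = ∑ i, ∑ j, A i j ^ 2 := by
  rw [frobenius_norm_def, ← Real.rpow_natCast, ← Real.rpow_mul (by positivity)]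
  norm_num

lemma trace_transpose_mul_self_eq_frobenius_norm_sq (A : Matrix m n ℝ) :
    (Aᵀ * A).trace = ‖A‖ ^ 2 := by
  rw [frobenius_norm_sq_eq_sum, sum_comm]
  simp [trace, mul_apply, sq]

lemma frobNorm_eq_norm {M N : ℕ} (A : Matrix (Fin M) (Fin N) ℝ) : frobNorm A = ‖A‖ := by
  rw [frobNorm, trace_transpose_mul_self_eq_frobenius_norm_sq, Real.sqrt_sq (norm_nonneg A)]

lemma sq_trace_le_card_mul_frobenius_norm_sq (A : Matrix n n ℝ) :
    A.trace ^ 2 ≤ Fintype.card n * ‖A‖ ^ 2 := by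
  rw [frobenius_norm_sq_eq_sum]
  calc A.trace ^ 2 ≤ Fintype.card n * ∑ i, A i i ^ 2 := sq_sum_le_card_mul_sum_sq
    _ ≤ Fintype.card n * ∑ i, ∑ j, A i j ^ 2 := by
      gcongr with i
      exact single_le_sum (fun j _ ↦ sq_nonneg (A i j)) (mem_univ i)

end Frobenius

lemma sq_trace_le_three_mul_frobenius_norm_sq (A : Matrix (Fin 3) (Fin 3) ℝ) :
    A.trace ^ 2 ≤ 3 * ‖A‖ ^ 2 := by
  simpa using sq_trace_le_card_mul_frobenius_norm_sq A

lemma trace_Etil (ξ : Matrix (Fin 3) (Fin 3) ℝ) : (Etil ξ).trace = ξ.trace + ‖ξ‖ ^ 2 / 2 := by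
  rw [Etil, trace_smul, trace_add, trace_add, trace_transpose,
    trace_transpose_mul_self_eq_frobenius_norm_sq, smul_eq_mul]
  ring

lemma norm_Etil_le (ξ : Matrix (Fin 3) (Fin 3) ℝ) : ‖Etil ξ‖ ≤ ‖ξ‖ + ‖ξ‖ ^ 2 / 2 := by
  calc ‖Etil ξ‖ = ‖ξ + ξᵀ + ξᵀ * ξ‖ / 2 := by rw [Etil, norm_smul]; norm_num; ring
    _ ≤ (‖ξ‖ + ‖ξᵀ‖ + ‖ξᵀ‖ * ‖ξ‖) / 2 := by
      gcongr
      exact norm_add₃_le.trans (add_le_add_right (frobenius_norm_mul ξᵀ ξ) _)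
    _ = ‖ξ‖ + ‖ξ‖ ^ 2 / 2 := by rw [frobenius_norm_transpose]; ring

lemma norm_pow_four_div_sixteen_sub_le_sq_trace_Etil (ξ : Matrix (Fin 3) (Fin 3) ℝ) :
    ‖ξ‖ ^ 4 / 16 - 36 ≤ (Etil ξ).trace ^ 2 := by
  have htr := sq_trace_le_three_mul_frobenius_norm_sq ξ
  rw [trace_Etil]
  nlinarith [sq_nonneg (2 * ξ.trace + ‖ξ‖ ^ 2 / 2), sq_nonneg (‖ξ‖ ^ 2 / 4 - 6)]

lemma sq_norm_Etil_le (ξ : Matrix (Fin 3) (Fin 3) ℝ) : ‖Etil ξ‖ ^ 2 ≤ 2 * (‖ξ‖ ^ 4 + 1) := by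
  have hE := pow_le_pow_left₀ (norm_nonneg _) (norm_Etil_le ξ) 2
  nlinarith [norm_nonneg ξ, sq_nonneg (‖ξ‖ - 1), sq_nonneg (‖ξ‖ ^ 2 - 1)]

/-- The Saint Venant–Kirchhoff energy as a function of the strain `A = Ẽ(ξ)`. -/
noncomputable def svkEnergy (l m : ℝ) (A : Matrix (Fin 3) (Fin 3) ℝ) : ℝ :=
  l / 2 * A.trace ^ 2 + m * ‖A‖ ^ 2

lemma sq_trace_le_svkEnergy {l m : ℝ} (hl : 0 ≤ l) (hm : 0 ≤ m) (A : Matrix (Fin 3) (Fin 3) ℝ) :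
    (l + m) / 3 * A.trace ^ 2 ≤ svkEnergy l m A := by
  have htr := sq_trace_le_three_mul_frobenius_norm_sq A
  unfold svkEnergy
  nlinarith [mul_le_mul_of_nonneg_left htr hm, mul_nonneg hl (sq_nonneg A.trace)]

lemma svkEnergy_le {l m : ℝ} (hl : 0 ≤ l) (hm : 0 ≤ m) (A : Matrix (Fin 3) (Fin 3) ℝ) :
    svkEnergy l m A ≤ 3 / 2 * (l + m) * ‖A‖ ^ 2 := by
  have htr := sq_trace_le_three_mul_frobenius_norm_sq A
  unfold svkEnergy
  nlinarith [mul_le_mul_of_nonneg_left htr hl, mul_nonneg hm (sq_nonneg ‖A‖)]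

/-- The two-sided estimate (2.24) of Example 2 for the Saint Venant–Kirchhoff
hyper-elastic energy density `F(ξ) = (λ/2)(tr Ẽ(ξ))² + μ‖Ẽ(ξ)‖²`. -/
theorem svk_two_sided_bound :
    ∃ C : ℝ, 1 < C ∧ ∀ l m : ℝ, 0 ≤ l → 0 ≤ m →
      ∀ ξ : Matrix (Fin 3) (Fin 3) ℝ,
        C⁻¹ * (l + m) * frobNorm ξ ^ 4 - C * (l + m) ≤
          l / 2 * (Etil ξ).trace ^ 2 + m * frobNorm (Etil ξ) ^ 2 ∧
        l / 2 * (Etil ξ).trace ^ 2 + m * frobNorm (Etil ξ) ^ 2 ≤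
          C * (l + m) * frobNorm ξ ^ 4 + C * (l + m) := by
  refine ⟨48, by norm_num, fun l m hl hm ξ => ?_⟩
  simp only [frobNorm_eq_norm]
  change _ ≤ svkEnergy l m (Etil ξ) ∧ svkEnergy l m (Etil ξ) ≤ _
  have hlm : 0 ≤ l + m := add_nonneg hl hm
  have hξ : 0 ≤ ‖ξ‖ ^ 4 := by positivity
  constructor
  · calc 48⁻¹ * (l + m) * ‖ξ‖ ^ 4 - 48 * (l + m) ≤ (l + m) / 3 * (‖ξ‖ ^ 4 / 16 - 36) := by
          nlinarith
      _ ≤ (l + m) / 3 * (Etil ξ).trace ^ 2 := by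
          gcongr; exact norm_pow_four_div_sixteen_sub_le_sq_trace_Etil ξ
      _ ≤ svkEnergy l m (Etil ξ) := sq_trace_le_svkEnergy hl hm _
  · calc svkEnergy l m (Etil ξ) ≤ 3 / 2 * (l + m) * ‖Etil ξ‖ ^ 2 := svkEnergy_le hl hm _
      _ ≤ 3 / 2 * (l + m) * (2 * (‖ξ‖ ^ 4 + 1)) := by gcongr; exact sq_norm_Etil_le ξ
      _ ≤ 48 * (l + m) * ‖ξ‖ ^ 4 + 48 * (l + m) := by nlinarith [mul_nonneg hlm hξ]
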